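/- (Lemma 5) Let G be a DAG, T_s a DFS arborescence rooted at s, s1 a child of s, and z, w ∈ T_{s1} with z a proper ancestor of w in T_s. Let Z = (z = w'_0, ..., w'_{k-1} = w) be the tree path from z to w. If s ∉ J(z, w'_i) for all i = 1, ..., k-1, then s ∉ J(w'_i, w'_j) for all i, j = 1, ..., k-1 with i ≠ j. -/

import Mathlib

variable {V : Type*}

/-- A directed graph (given as a relation) is acyclic: no nontrivial closed directed walk. -/
def Acyclic (G : V → V → Prop) : Prop := Irreflexive (Relation.TransGen G)

/-- `l` is a directed path in `G` from `a` to `b`: consecutive vertices are joined by arcs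
of `G` and no vertex is repeated. -/
def IsDipath (G : V → V → Prop) (l : List V) (a b : V) : Prop :=
  l.Chain' G ∧ l.head? = some a ∧ l.getLast? = some b ∧ l.Nodup

/-- The internal vertices of a path (all vertices except the two endpoints). -/
def internalVerts (l : List V) : List V := l.tail.dropLast

/-- `s` is a junction of the pair of distinct vertices `u, v` in `G`: there are directed
paths from `s` to `u` and from `s` to `v` sharing no vertex other than `s`. -/
def IsJunction (G : V → V → Prop) (s u v : V) : Prop :=
  u ≠ v ∧ ∃ p q : List V, IsDipath G p s u ∧ IsDipath G q s v ∧
    ∀ x, x ∈ p → x ∈ q → x = s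

/-- `z` is the lowest common ancestor of `u` and `v` in the tree (arborescence) `T`:
a common ancestor that is a descendant of every common ancestor. -/
def IsTreeLCA (T : V → V → Prop) (u v z : V) : Prop :=
  Relation.ReflTransGen T z u ∧ Relation.ReflTransGen T z v ∧
    ∀ y, Relation.ReflTransGen T y u → Relation.ReflTransGen T y v →
      Relation.ReflTransGen T y z

/-- `s` is a lowest common ancestor of `u, v` in the DAG `G`: a junction of `u, v` such
that there is no directed path from `s` to any other junction of `u, v`. -/
def IsLCA (G : V → V → Prop) (s u v : V) : Prop :=
  IsJunction G s u v ∧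
    ∀ s', s' ≠ s → IsJunction G s' u v → ¬ Relation.TransGen G s s'

/-- A DFS arborescence of `G` rooted at `s`, spanning all descendants of `s`, together
with its post-order numbering and the standard structural properties of depth-first
search: tree arcs are graph arcs, the root has no parent, parents are unique, every
`G`-descendant of `s` is in the tree, `post` is injective on the tree, `post` strictly
decreases from a vertex to its proper tree descendants, the post-order numbers of each
subtree form a contiguous interval, and every graph arc between tree vertices is a
tree/forward arc, a back arc, or a (post-order decreasing) cross arc. -/
structure DFSArborescence (G : V → V → Prop) (s : V) where
  T : V → V → Prop
  post : V → ℕ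
  sub : ∀ ⦃a b⦄, T a b → G a b
  root_no_parent : ∀ a, ¬ T a s
  unique_parent : ∀ ⦃a b c⦄, T a b → T c b → a = c
  verts_reach : ∀ ⦃a b⦄, T a b → Relation.ReflTransGen T s a
  spans : ∀ ⦃v⦄, Relation.ReflTransGen G s v → Relation.ReflTransGen T s v
  post_inj : ∀ ⦃u v⦄, Relation.ReflTransGen T s u → Relation.ReflTransGen T s v →
      post u = post v → u = v
  post_desc : ∀ ⦃u v⦄, Relation.ReflTransGen T s u → Relation.TransGen T u v →
      post v < post u
  post_contig : ∀ ⦃u v x⦄, Relation.ReflTransGen T s u → Relation.ReflTransGen T u v →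
      Relation.ReflTransGen T s x → post v ≤ post x → post x ≤ post u →
      Relation.ReflTransGen T u x
  arc_classify : ∀ ⦃u v⦄, G u v → Relation.ReflTransGen T s u →
      Relation.ReflTransGen T s v →
      Relation.ReflTransGen T u v ∨ Relation.ReflTransGen T v u ∨ post v < post u

/-! Suppose `P`, `Q` are paths from `s` to `w'_i`, `w'_j` meeting only in `s`. The tree
ancestors of `z` form a chain, so let `x`, `y` be the deepest ones on `P` and `Q`; say `x` is
above `y`. Follow `Q` down to `y` and then the tree from `y` to `z`. A vertex of that tree
segment lying on `P` would be an ancestor of `z` on `P`, hence above `x`, hence above `y`, so it is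
`y` itself by acyclicity, which lies on `Q`. So the new path meets `P` only in `s`, i.e.
`s ∈ J(z, w'_i)`. -/

open Relation

theorem Acyclic.eq_of_reflTransGen {G : V → V → Prop} (hG : Acyclic G) {a b : V}
    (hab : ReflTransGen G a b) (hba : ReflTransGen G b a) : a = b := by
  rcases reflTransGen_iff_eq_or_transGen.1 hab with rfl | hab
  · rfl
  · exact (hG a (hab.trans_left hba)).elim

theorem reflTransGen_total_of_unique_parent {T : V → V → Prop}
    (hT : ∀ ⦃a b c⦄, T a b → T c b → a = c) {u v z : V}
    (hu : ReflTransGen T u z) (hv : ReflTransGen T v z) :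
    ReflTransGen T u v ∨ ReflTransGen T v u := by
  induction hu generalizing v with
  | refl => exact .inr hv
  | @tail c d huc hcd ih =>
    rcases hv.cases_tail with rfl | ⟨e, hve, hed⟩
    · exact .inl (huc.tail hcd)
    · exact ih (hT hcd hed ▸ hve)

theorem List.exists_max_of_total {α : Type*} {r : α → α → Prop} [IsTrans α r] {p : α → Prop}
    {l : List α} (hex : ∃ a ∈ l, p a)
    (htot : ∀ a ∈ l, ∀ b ∈ l, p a → p b → r a b ∨ r b a) :
    ∃ m ∈ l, p m ∧ ∀ a ∈ l, p a → r a m := by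
  induction l with
  | nil => simp at hex
  | cons a t ih =>
    have hrefl : p a → r a a := fun hpa => (htot a mem_cons_self a mem_cons_self hpa hpa).elim id id
    by_cases ht : ∃ b ∈ t, p b
    · obtain ⟨m, hmt, hpm, hm⟩ :=
        ih ht fun x hx y hy => htot x (mem_cons_of_mem _ hx) y (mem_cons_of_mem _ hy)
      by_cases hpa : p a
      · rcases htot a mem_cons_self m (mem_cons_of_mem _ hmt) hpa hpm with ham | hma
        · exact ⟨m, mem_cons_of_mem _ hmt, hpm, by
            rintro b (_ | ⟨_, hb⟩) hpb
            exacts [ham, hm b hb hpb]⟩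
        · exact ⟨a, mem_cons_self, hpa, by
            rintro b (_ | ⟨_, hb⟩) hpb
            exacts [hrefl hpa, _root_.trans (hm b hb hpb) hma]⟩
      · exact ⟨m, mem_cons_of_mem _ hmt, hpm, by
          rintro b (_ | ⟨_, hb⟩) hpb
          exacts [absurd hpb hpa, hm b hb hpb]⟩
    · have hpa : p a := by
        obtain ⟨b, hb, hpb⟩ := hex
        rcases mem_cons.1 hb with rfl | hb
        exacts [hpb, absurd ⟨b, hb, hpb⟩ ht]
      exact ⟨a, mem_cons_self, hpa, by
        rintro b (_ | ⟨_, hb⟩) hpb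
        exacts [hrefl hpa, absurd ⟨b, hb, hpb⟩ ht]⟩

theorem Acyclic.mono {G T : V → V → Prop} (hG : Acyclic G) (hTG : ∀ ⦃a b⦄, T a b → G a b) :
    Acyclic T :=
  fun a h => hG a (TransGen.mono (fun _ _ hab => hTG hab) _ _ h)

namespace IsDipath

variable {G : V → V → Prop} {l : List V} {a b x : V}

theorem head_mem (h : IsDipath G l a b) : a ∈ l := by
  obtain ⟨t, rfl⟩ := List.head?_eq_some_iff.1 h.2.1
  exact List.mem_cons_self

theorem reflTransGen_head (h : IsDipath G l a b) (hx : x ∈ l) : ReflTransGen G a x :=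
  h.1.induction (ReflTransGen G a) _ (fun _ _ hyz hy => hy.tail hyz)
    (fun hne => by rw [(List.head_eq_iff_head?_eq_some hne).2 h.2.1]) x hx

theorem reflTransGen_last (h : IsDipath G l a b) (hx : x ∈ l) : ReflTransGen G x b :=
  h.1.backwards_induction (ReflTransGen G · b) _ (fun _ _ hyz hz => hz.head hyz)
    (fun hne => by rw [(List.getLast_eq_iff_getLast?_eq_some hne).2 h.2.2.1]) x hx

theorem mono {T : V → V → Prop} (hTG : ∀ ⦃a b⦄, T a b → G a b) (h : IsDipath T l a b) :
    IsDipath G l a b :=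
  ⟨h.1.imp fun _ _ hab => hTG hab, h.2⟩

theorem get_ne_head (h : IsDipath G l a b) {k : ℕ} (hk : k < l.length) (hk0 : 0 < k) :
    l.get ⟨k, hk⟩ ≠ a := by
  intro hka
  have h0 : l.get ⟨0, hk0.trans hk⟩ = a := by
    have := h.2.1
    rw [List.head?_eq_getElem?, List.getElem?_eq_some_iff] at this
    exact this.2
  have := (h.2.2.2.get_inj_iff).1 (hka.trans h0.symm)
  simp only [Fin.mk.injEq] at this
  omega

theorem exists_prefix (h : IsDipath G l a b) (hx : x ∈ l) :
    ∃ l', l' <+: l ∧ IsDipath G l' a x := by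
  obtain ⟨l₁, l₂, rfl⟩ := List.append_of_mem hx
  have hpre : l₁ ++ [x] <+: l₁ ++ x :: l₂ := ⟨l₂, by simp⟩
  refine ⟨l₁ ++ [x], hpre, h.1.prefix hpre, ?_, List.getLast?_concat, hpre.sublist.nodup h.2.2.2⟩
  rcases l₁ with _ | ⟨c, t⟩ <;> simpa using h.2.1

theorem append {p q : List V} {c : V} (hp : IsDipath G p a b) (hq : IsDipath G q b c)
    (hpq : ∀ u ∈ p, u ∈ q → u = b) : IsDipath G (p ++ q.tail) a c := by
  obtain ⟨t, rfl⟩ := List.head?_eq_some_iff.1 hq.2.1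
  obtain ⟨hbt, ht⟩ := List.nodup_cons.1 hq.2.2.2
  refine ⟨hp.1.append hq.1.tail ?_, ?_, ?_, ?_⟩
  · intro x hx y hy
    rw [hp.2.2.1, Option.mem_def, Option.some.injEq] at hx
    exact hx ▸ List.isChain_cons.1 hq.1 |>.1 y hy
  · rw [List.head?_append, hp.2.1]; rfl
  · have := hq.2.2.1
    rcases t with _ | ⟨d, t⟩
    · simp only [List.getLast?_singleton, Option.some.injEq] at this
      simpa [this] using hp.2.2.1
    · rw [List.getLast?_cons_cons] at this
      rw [List.tail_cons, List.getLast?_append_of_ne_nil _ (List.cons_ne_nil d t), this]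
  · refine List.nodup_append.2 ⟨hp.2.2.2, ht, ?_⟩
    rintro u hu _ hu' rfl
    exact hbt (hpq u hu (List.mem_cons_of_mem _ hu') ▸ hu')

end IsDipath

theorem Acyclic.exists_isDipath {G : V → V → Prop} (hG : Acyclic G) {a b : V}
    (h : ReflTransGen G a b) : ∃ l, IsDipath G l a b := by
  induction h using ReflTransGen.head_induction_on with
  | refl => exact ⟨[b], List.isChain_singleton b, rfl, rfl, List.nodup_singleton b⟩
  | @head d e hde _ ih =>
    obtain ⟨l, hl⟩ := ih
    obtain ⟨t, rfl⟩ := List.head?_eq_some_iff.1 hl.2.1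
    refine ⟨d :: e :: t, List.isChain_cons_cons.2 ⟨hde, hl.1⟩, rfl, ?_, ?_⟩
    · rw [List.getLast?_cons_cons]; exact hl.2.2.1
    · exact List.nodup_cons.2 ⟨fun hd => hG d (.head' hde (hl.reflTransGen_head hd)), hl.2.2.2⟩

theorem exists_isDipath_via_treeDescendant {G T : V → V → Prop} (hG : Acyclic G)
    (hTG : ∀ ⦃a b⦄, T a b → G a b) {P Q : List V} {s b y z : V}
    (hQ : IsDipath G Q s b) (hPQ : ∀ u ∈ P, u ∈ Q → u = s) (hyQ : y ∈ Q)
    (hyz : ReflTransGen T y z) (hPy : ∀ u ∈ P, ReflTransGen T u z → ReflTransGen T u y) :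
    ∃ R, IsDipath G R s z ∧ ∀ u ∈ R, u ∈ P → u = s := by
  obtain ⟨Q', hQ'Q, hQ'⟩ := hQ.exists_prefix hyQ
  obtain ⟨C, hC⟩ := (hG.mono hTG).exists_isDipath hyz
  refine ⟨Q' ++ C.tail, hQ'.append (hC.mono hTG) fun u hu hu' => ?_, fun u hu huP => hPQ u huP ?_⟩
  · exact hG.eq_of_reflTransGen (hQ'.reflTransGen_last hu) ((hC.mono hTG).reflTransGen_head hu')
  rcases List.mem_append.1 hu with hu | hu
  · exact hQ'Q.subset hu
  · have hu := List.mem_of_mem_tail hu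
    have huy : u = y := (hG.mono hTG).eq_of_reflTransGen
      (hPy u huP (hC.reflTransGen_last hu)) (hC.reflTransGen_head hu)
    exact huy ▸ hyQ

theorem IsJunction.isJunction_of_treeAncestor {G T : V → V → Prop} (hG : Acyclic G)
    (hTG : ∀ ⦃a b⦄, T a b → G a b) (hT : ∀ ⦃a b c⦄, T a b → T c b → a = c)
    {s z a b : V} (hsz : ReflTransGen T s z) (ha : a ≠ z) (hb : b ≠ z)
    (h : IsJunction G s a b) : IsJunction G s z a ∨ IsJunction G s z b := by
  obtain ⟨-, P, Q, hP, hQ, hPQ⟩ := h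
  have deepest : ∀ L : List V, s ∈ L → ∃ y ∈ L, ReflTransGen T y z ∧
      ∀ u ∈ L, ReflTransGen T u z → ReflTransGen T u y := fun L hsL =>
    List.exists_max_of_total ⟨s, hsL, hsz⟩ fun _ _ _ _ hu hv =>
      reflTransGen_total_of_unique_parent hT hu hv
  obtain ⟨x, hxP, hxz, hx⟩ := deepest P hP.head_mem
  obtain ⟨y, hyQ, hyz, hy⟩ := deepest Q hQ.head_mem
  rcases reflTransGen_total_of_unique_parent hT hxz hyz with hxy | hyx
  · obtain ⟨R, hR, hRP⟩ := exists_isDipath_via_treeDescendant hG hTG hQ hPQ hyQ hyz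
      fun u hu huz => (hx u hu huz).trans hxy
    exact .inl ⟨ha.symm, R, P, hR, hP, hRP⟩
  · obtain ⟨R, hR, hRQ⟩ := exists_isDipath_via_treeDescendant hG hTG hP
      (fun u hu hu' => hPQ u hu' hu) hxP hxz fun u hu huz => (hy u hu huz).trans hyx
    exact .inr ⟨hb.symm, R, Q, hR, hQ, hRQ⟩

theorem stmt12_general (G : V → V → Prop) (hG : Acyclic G) (s : V) (A : DFSArborescence G s)
    (s1 : V) (h1 : A.T s s1) (z w : V)
    (hz : Relation.ReflTransGen A.T s1 z)
    (Z : List V) (hZ : IsDipath A.T Z z w)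
    (hnot : ∀ i (hi : i < Z.length), 0 < i → ¬ IsJunction G s z (Z.get ⟨i, hi⟩)) :
    ∀ i (hi : i < Z.length) j (hj : j < Z.length), 0 < i → 0 < j → i ≠ j →
      ¬ IsJunction G s (Z.get ⟨i, hi⟩) (Z.get ⟨j, hj⟩) := by
  intro i hi j hj hi0 hj0 _ hJ
  rcases hJ.isJunction_of_treeAncestor hG A.sub A.unique_parent (.head h1 hz)
      (hZ.get_ne_head hi hi0) (hZ.get_ne_head hj hj0) with h | h
  exacts [hnot i hi hi0 h, hnot j hj hj0 h]

/-- Lemma 5: if `s ∉ J(z, w'_i)` for every vertex `w'_i` (i ≥ 1) of the tree path from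
`z` to `w`, then `s ∉ J(w'_i, w'_j)` for all such `i ≠ j`. -/
theorem stmt12 (G : V → V → Prop) (hG : Acyclic G) (s : V) (A : DFSArborescence G s)
    (s1 : V) (h1 : A.T s s1) (z w : V)
    (hz : Relation.ReflTransGen A.T s1 z) (hw : Relation.ReflTransGen A.T s1 w)
    (Z : List V) (hZ : IsDipath A.T Z z w) (hlen : 2 ≤ Z.length)
    (hnot : ∀ i (hi : i < Z.length), 0 < i → ¬ IsJunction G s z (Z.get ⟨i, hi⟩)) :
    ∀ i (hi : i < Z.length) j (hj : j < Z.length), 0 < i → 0 < j → i ≠ j →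
      ¬ IsJunction G s (Z.get ⟨i, hi⟩) (Z.get ⟨j, hj⟩) :=
  stmt12_general G hG s A s1 h1 z w hz Z hZ hnot
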